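/- Consider the system ẋ(t) = A x(t) + B u(t), y(t) = C x(t) + D u(t) with A ∈ ℝ^{n×n}, B ∈ ℝ^{n×m}, C ∈ ℝ^{p×n}, D ∈ ℝ^{p×m}. Let T > 0, N ∈ ℕ, let u : [0,NT] → ℝ^m be continuously differentiable for all t ∈ [0,NT] with t ≠ iT (i = 1,…,N−1) and continuously differentiable from the right at the instants t = iT, let x : [0,NT] → ℝ^n solve ẋ = A x + B u, let y = C x + D u, and assume the data (u,x) is persistently excited of order n+1. Then signals ū : [0,T] → ℝ^m, ȳ : [0,T] → ℝ^p, with ū continuously differentiable, are an input-output trajectory of the system corresponding to some initial condition x̄(0) (i.e., there exists differentiable x̄ with ẋ̄ = A x̄ + B ū and ȳ = C x̄ + D ū on [0,T)) if and only if there exists a continuously differentiable α : [0,T) → ℝ^N such that for all 0 ≤ t < T: (i) H_{1,T}(u_{[0,N−1]}(t)) α̇(t) = −H_{1,T}(u̇_{[0,N−1]}(t)) α(t) + ū̇(t) and H_{1,T}(x_{[0,N−1]}(t)) α̇(t) = 0; (ii) H_{1,T}(u_{[0,N−1]}(0)) α(0) = ū(0) and H_{1,T}(x_{[0,N−1]}(0))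 α(0) = x̄(0); and (iii) H_{1,T}(u_{[0,N−1]}(t)) α(t) = ū(t) and H_{1,T}(y_{[0,N−1]}(t)) α(t) = ȳ(t). -/

import Mathlib

open Set Matrix

/-- Time-varying matrix `H_{1,T}(z_{[0,N-1]}(t)) = [z(t), z(t+T), …, z(t+(N-1)T)]`. -/
def H1 {σ : ℕ} (N : ℕ) (T : ℝ) (z : ℝ → Fin σ → ℝ) (t : ℝ) :
    Matrix (Fin σ) (Fin N) ℝ :=
  Matrix.of fun a j => z (t + ((j : ℕ) : ℝ) * T) a

attribute [local instance] Matrix.linftyOpNormedRing Matrix.linftyOpNormedAlgebra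

private lemma hasDerivWithinAt_matrix {κ : Type*} [Fintype κ] [DecidableEq κ]
    {f : ℝ → Matrix κ κ ℝ} {f' : Matrix κ κ ℝ} {s : Set ℝ} {x : ℝ} :
    HasDerivWithinAt f f' s x ↔ ∀ i j, HasDerivWithinAt (fun t => f t i j) (f' i j) s x := by
  let l : Matrix κ κ ℝ ≃ₗ[ℝ] (κ → κ → ℝ) :=
    { toFun := fun A i j => A i j
      invFun := fun g => Matrix.of g
      map_add' := fun _ _ => rfl
      map_smul' := fun _ _ => rfl
      left_inv := fun _ => rfl
      right_inv := fun _ => rfl }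
  let e : Matrix κ κ ℝ ≃L[ℝ] (κ → κ → ℝ) := l.toContinuousLinearEquiv
  constructor
  · intro h i j
    have h2 : HasDerivWithinAt (fun t => e (f t)) (e f') s x := by
      have := (e.toContinuousLinearMap.hasFDerivAt (x := f x)).comp_hasDerivWithinAt x h
      exact this
    exact hasDerivWithinAt_pi.mp (hasDerivWithinAt_pi.mp h2 i) j
  · intro h
    have h2 : HasDerivWithinAt (fun t => e (f t)) (e f') s x :=
      hasDerivWithinAt_pi.mpr fun i => hasDerivWithinAt_pi.mpr fun j => h i j
    have h3 := (e.symm.toContinuousLinearMap.hasFDerivAt (x := e (f x))).comp_hasDerivWithinAt x h2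
    simp only [Function.comp_def, ContinuousLinearEquiv.coe_coe,
      ContinuousLinearEquiv.symm_apply_apply] at h3
    exact h3.congr_deriv (e.symm_apply_apply f')

/-- **Willems' lemma for continuous-time systems (Theorem 2).**
Let `u` be piecewise continuously differentiable, `x` solve `ẋ = A x + B u`,
`y = C x + D u`, and let the data `(u,x)` be persistently excited of order `n+1`.
Then `(ū, ȳ)`, with `ū` continuously differentiable, is an input-output trajectory of
the system corresponding to the initial condition `x̄₀` if and only if there exists a
continuously differentiable `α : [0,T) → ℝ^N` satisfying equations (6), (7) and (8). -/
theorem stmt8 {n m p N : ℕ}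
    (A : Matrix (Fin n) (Fin n) ℝ) (B : Matrix (Fin n) (Fin m) ℝ)
    (C : Matrix (Fin p) (Fin n) ℝ) (D : Matrix (Fin p) (Fin m) ℝ)
    (T : ℝ) (hT : 0 < T)
    (u du : ℝ → Fin m → ℝ) (x : ℝ → Fin n → ℝ) (y : ℝ → Fin p → ℝ)
    (hud : ∀ i : ℕ, i < N →
      (∀ t ∈ Set.Ioo ((i : ℝ) * T) (((i : ℝ) + 1) * T), HasDerivAt u (du t) t) ∧
      HasDerivWithinAt u (du ((i : ℝ) * T)) (Set.Ici ((i : ℝ) * T)) ((i : ℝ) * T) ∧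
      ContinuousOn du (Set.Ico ((i : ℝ) * T) (((i : ℝ) + 1) * T)))
    (hx : ∀ t ∈ Set.Icc (0:ℝ) ((N : ℝ) * T),
      HasDerivWithinAt x (A.mulVec (x t) + B.mulVec (u t)) (Set.Icc 0 ((N : ℝ) * T)) t)
    (hy : ∀ t ∈ Set.Icc (0:ℝ) ((N : ℝ) * T), y t = C.mulVec (x t) + D.mulVec (u t))
    (hpe : ∀ t ∈ Set.Ico (0:ℝ) T,
      (Matrix.fromRows (H1 N T u t) (H1 N T x t)).rank = m + n)
    (ub dub : ℝ → Fin m → ℝ) (yb : ℝ → Fin p → ℝ)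
    (hub : ∀ t ∈ Set.Icc (0:ℝ) T, HasDerivWithinAt ub (dub t) (Set.Icc 0 T) t)
    (hdub : ContinuousOn dub (Set.Icc 0 T))
    (xb0 : Fin n → ℝ) :
    (∃ xb : ℝ → Fin n → ℝ, xb 0 = xb0 ∧
      (∀ t ∈ Set.Ico (0:ℝ) T,
        HasDerivWithinAt xb (A.mulVec (xb t) + B.mulVec (ub t)) (Set.Ico 0 T) t) ∧
      (∀ t ∈ Set.Ico (0:ℝ) T, yb t = C.mulVec (xb t) + D.mulVec (ub t))) ↔
    (∃ α αd : ℝ → Fin N → ℝ,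
      (∀ t ∈ Set.Ico (0:ℝ) T, HasDerivWithinAt α (αd t) (Set.Ico 0 T) t) ∧
      ContinuousOn αd (Set.Ico 0 T) ∧
      (∀ t ∈ Set.Ico (0:ℝ) T,
        (H1 N T u t).mulVec (αd t) = -((H1 N T du t).mulVec (α t)) + dub t ∧
        (H1 N T x t).mulVec (αd t) = 0) ∧
      (H1 N T u 0).mulVec (α 0) = ub 0 ∧
      (H1 N T x 0).mulVec (α 0) = xb0 ∧
      (∀ t ∈ Set.Ico (0:ℝ) T,
        (H1 N T u t).mulVec (α t) = ub t ∧
        (H1 N T y t).mulVec (α t) = yb t)) := by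
  classical
  -- basic membership facts
  have hNT : ∀ (j : Fin N) (s : ℝ), s ∈ Set.Ico (0:ℝ) T →
      s + ((j:ℕ):ℝ) * T ∈ Set.Icc (0:ℝ) ((N:ℝ) * T) := by
    intro j s hs
    have hj : ((j:ℕ):ℝ) + 1 ≤ (N:ℝ) := by exact_mod_cast j.isLt
    have hjT : 0 ≤ ((j:ℕ):ℝ) * T := mul_nonneg (by positivity) hT.le
    have h1 : (((j:ℕ):ℝ) + 1) * T ≤ (N:ℝ) * T := mul_le_mul_of_nonneg_right hj hT.le
    constructor
    · linarith [hs.1]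
    · nlinarith [hs.2]
  -- derivative of the shifted state
  have hx' : ∀ (j : Fin N), ∀ t ∈ Set.Ico (0:ℝ) T,
      HasDerivWithinAt (fun s => x (s + ((j:ℕ):ℝ) * T))
        (A.mulVec (x (t + ((j:ℕ):ℝ) * T)) + B.mulVec (u (t + ((j:ℕ):ℝ) * T)))
        (Set.Ico 0 T) t := by
    intro j t ht
    have h1 := hx (t + ((j:ℕ):ℝ) * T) (hNT j t ht)
    have h2 : HasDerivWithinAt (fun s : ℝ => s + ((j:ℕ):ℝ) * T) 1 (Set.Ico (0:ℝ) T) t :=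
      ((hasDerivAt_id t).add_const (((j:ℕ):ℝ) * T)).hasDerivWithinAt
    have h3 := HasDerivWithinAt.scomp t h1 h2 (fun s hs => hNT j s hs)
    simpa [Function.comp_def] using h3
  -- derivative of the shifted input
  have hu' : ∀ (j : Fin N), ∀ t ∈ Set.Ico (0:ℝ) T,
      HasDerivWithinAt (fun s => u (s + ((j:ℕ):ℝ) * T)) (du (t + ((j:ℕ):ℝ) * T))
        (Set.Ico 0 T) t := by
    intro j t ht
    have h2 : HasDerivWithinAt (fun s : ℝ => s + ((j:ℕ):ℝ) * T) 1 (Set.Ico (0:ℝ) T) t :=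
      ((hasDerivAt_id t).add_const (((j:ℕ):ℝ) * T)).hasDerivWithinAt
    rcases eq_or_lt_of_le ht.1 with h0 | h0
    · subst h0
      obtain ⟨-, hj2, -⟩ := hud j j.isLt
      have hmap : Set.MapsTo (fun s : ℝ => s + ((j:ℕ):ℝ) * T) (Set.Ico (0:ℝ) T)
          (Set.Ici (((j:ℕ):ℝ) * T)) := by
        intro s hs; simp only [Set.mem_Ici]; linarith [hs.1]
      have h1 : HasDerivWithinAt u (du (((j:ℕ):ℝ) * T)) (Set.Ici (((j:ℕ):ℝ) * T))
          ((fun s : ℝ => s + ((j:ℕ):ℝ) * T) 0) := by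
        simpa [zero_add] using hj2
      have h3 := HasDerivWithinAt.scomp (0:ℝ) h1 h2 hmap
      simpa [zero_add, Function.comp_def] using h3
    · obtain ⟨hj1, -, -⟩ := hud j j.isLt
      have hmem : t + ((j:ℕ):ℝ) * T ∈ Set.Ioo (((j:ℕ):ℝ) * T) ((((j:ℕ):ℝ) + 1) * T) := by
        constructor
        · linarith
        · nlinarith [ht.2]
      have h1 := hj1 _ hmem
      have h3 := HasDerivAt.scomp_hasDerivWithinAt t h1 h2
      simpa [Function.comp_def] using h3
  -- continuity of the shifted input derivative
  have hdu' : ∀ (j : Fin N), ContinuousOn (fun s => du (s + ((j:ℕ):ℝ) * T))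
      (Set.Ico (0:ℝ) T) := by
    intro j
    obtain ⟨-, -, hj3⟩ := hud j j.isLt
    refine hj3.comp ((continuous_id.add continuous_const).continuousOn) ?_
    intro s hs
    constructor
    · simp only; linarith [hs.1]
    · simp only; nlinarith [hs.2]
  have hxc : ∀ (j : Fin N), ContinuousOn (fun s => x (s + ((j:ℕ):ℝ) * T)) (Set.Ico (0:ℝ) T) :=
    fun j s hs => (hx' j s hs).continuousWithinAt
  have huc : ∀ (j : Fin N), ContinuousOn (fun s => u (s + ((j:ℕ):ℝ) * T)) (Set.Ico (0:ℝ) T) :=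
    fun j s hs => (hu' j s hs).continuousWithinAt
  have hubd' : ∀ t ∈ Set.Ico (0:ℝ) T, HasDerivWithinAt ub (dub t) (Set.Ico 0 T) t :=
    fun t ht => (hub t (Set.Ico_subset_Icc_self ht)).mono Set.Ico_subset_Icc_self
  have hubc : ContinuousOn ub (Set.Ico (0:ℝ) T) :=
    fun s hs => (hubd' s hs).continuousWithinAt
  have hdubc : ContinuousOn dub (Set.Ico (0:ℝ) T) := hdub.mono Set.Ico_subset_Icc_self
  -- structural identities for H1
  have hH1dx : ∀ t : ℝ, H1 N T (fun s => A.mulVec (x s) + B.mulVec (u s)) t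
      = A * H1 N T x t + B * H1 N T u t := by
    intro t
    ext a j
    simp [H1, Matrix.add_apply, Matrix.mul_apply, Matrix.mulVec, dotProduct]
  have hH1y : ∀ t ∈ Set.Ico (0:ℝ) T, H1 N T y t = C * H1 N T x t + D * H1 N T u t := by
    intro t ht
    ext a j
    have := hy (t + ((j:ℕ):ℝ) * T) (hNT j t ht)
    simp [H1, Matrix.add_apply, Matrix.mul_apply, this, Matrix.mulVec, dotProduct]
  have h0mem : (0:ℝ) ∈ Set.Ico (0:ℝ) T := ⟨le_refl 0, hT⟩
  constructor
  · -- forward direction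
    rintro ⟨xb, hxb0, hxbd, hybe⟩
    have hxbc : ContinuousOn xb (Set.Ico (0:ℝ) T) := fun s hs => (hxbd s hs).continuousWithinAt
    obtain ⟨Gf, hGfdef⟩ : ∃ Gf : ℝ → Matrix (Fin m ⊕ Fin n) (Fin N) ℝ,
        Gf = fun t => Matrix.fromRows (H1 N T u t) (H1 N T x t) := ⟨_, rfl⟩
    obtain ⟨Gd, hGddef⟩ : ∃ Gd : ℝ → Matrix (Fin m ⊕ Fin n) (Fin N) ℝ,
        Gd = fun t => Matrix.fromRows (H1 N T du t)
          (H1 N T (fun s => A.mulVec (x s) + B.mulVec (u s)) t) := ⟨_, rfl⟩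
    obtain ⟨Sm, hSmdef⟩ : ∃ Sm : ℝ → Matrix (Fin m ⊕ Fin n) (Fin m ⊕ Fin n) ℝ,
        Sm = fun t => Gf t * (Gf t)ᵀ := ⟨_, rfl⟩
    obtain ⟨Sd, hSddef⟩ : ∃ Sd : ℝ → Matrix (Fin m ⊕ Fin n) (Fin m ⊕ Fin n) ℝ,
        Sd = fun t => Gd t * (Gf t)ᵀ + Gf t * (Gd t)ᵀ := ⟨_, rfl⟩
    obtain ⟨Mm, hMmdef⟩ : ∃ Mm : ℝ → Matrix (Fin m ⊕ Fin n) (Fin m ⊕ Fin n) ℝ,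
        Mm = fun t => Ring.inverse (Sm t) := ⟨_, rfl⟩
    obtain ⟨Md, hMddef⟩ : ∃ Md : ℝ → Matrix (Fin m ⊕ Fin n) (Fin m ⊕ Fin n) ℝ,
        Md = fun t => -(Mm t * Sd t * Mm t) := ⟨_, rfl⟩
    obtain ⟨Pm, hPmdef⟩ : ∃ Pm : ℝ → Matrix (Fin N) (Fin m ⊕ Fin n) ℝ,
        Pm = fun t => (Gf t)ᵀ * Mm t := ⟨_, rfl⟩
    obtain ⟨Pd, hPddef⟩ : ∃ Pd : ℝ → Matrix (Fin N) (Fin m ⊕ Fin n) ℝ,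
        Pd = fun t => (Gd t)ᵀ * Mm t + (Gf t)ᵀ * Md t := ⟨_, rfl⟩
    obtain ⟨wv, hwvdef⟩ : ∃ wv : ℝ → (Fin m ⊕ Fin n) → ℝ,
        wv = fun t => Sum.elim (ub t) (xb t) := ⟨_, rfl⟩
    obtain ⟨wd, hwddef⟩ : ∃ wd : ℝ → (Fin m ⊕ Fin n) → ℝ,
        wd = fun t => Sum.elim (dub t) (A.mulVec (xb t) + B.mulVec (ub t)) := ⟨_, rfl⟩
    obtain ⟨αf, hαfdef⟩ : ∃ αf : ℝ → Fin N → ℝ,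
        αf = fun t => (Pm t).mulVec (wv t) := ⟨_, rfl⟩
    obtain ⟨αdf, hαdfdef⟩ : ∃ αdf : ℝ → Fin N → ℝ,
        αdf = fun t => (Pd t).mulVec (wv t) + (Pm t).mulVec (wd t) := ⟨_, rfl⟩
    -- entrywise derivatives of Gf
    have hGent : ∀ t ∈ Set.Ico (0:ℝ) T, ∀ i j,
        HasDerivWithinAt (fun s => Gf s i j) (Gd t i j) (Set.Ico 0 T) t := by
      intro t ht i j
      cases i with
      | inl a =>
        have := hasDerivWithinAt_pi.mp (hu' j t ht) a
        simpa [hGfdef, hGddef, H1] using this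
      | inr b =>
        have := hasDerivWithinAt_pi.mp (hx' j t ht) b
        simpa [hGfdef, hGddef, H1] using this
    have hGfc : ∀ i j, ContinuousOn (fun s => Gf s i j) (Set.Ico (0:ℝ) T) :=
      fun i j s hs => (hGent s hs i j).continuousWithinAt
    have hGdc : ∀ i j, ContinuousOn (fun s => Gd s i j) (Set.Ico (0:ℝ) T) := by
      intro i j
      cases i with
      | inl a =>
        have := (continuous_apply a).comp_continuousOn (hdu' j)
        simpa [hGddef, H1, Function.comp_def] using this
      | inr b =>
        have h1 : (fun s => Gd s (Sum.inr b) j) = fun s =>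
            (∑ c, A b c * x (s + ((j:ℕ):ℝ) * T) c) + ∑ c, B b c * u (s + ((j:ℕ):ℝ) * T) c := by
          funext s
          simp [hGddef, H1, Matrix.mulVec, dotProduct]
        rw [h1]
        refine ContinuousOn.add ?_ ?_
        · exact continuousOn_finset_sum _ fun c _ =>
            continuousOn_const.mul ((continuous_apply c).comp_continuousOn (hxc j))
        · exact continuousOn_finset_sum _ fun c _ =>
            continuousOn_const.mul ((continuous_apply c).comp_continuousOn (huc j))
    -- invertibility of Sm
    have hSU : ∀ t ∈ Set.Ico (0:ℝ) T, IsUnit (Sm t) := by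
      intro t ht
      have hr : (Sm t).rank = Fintype.card (Fin m ⊕ Fin n) := by
        simp only [hSmdef]
        rw [Matrix.rank_self_mul_transpose]
        simp only [hGfdef]
        rw [hpe t ht]
        simp
      have hrange : LinearMap.range (Sm t).mulVecLin = ⊤ := by
        apply Submodule.eq_top_of_finrank_eq
        have h1 : Module.finrank ℝ (LinearMap.range (Sm t).mulVecLin) = (Sm t).rank := rfl
        rw [h1, hr, Module.finrank_fintype_fun_eq_card]
      rw [← Matrix.mulVec_surjective_iff_isUnit]
      intro v
      obtain ⟨z, hz⟩ := LinearMap.range_eq_top.mp hrange v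
      exact ⟨z, by simpa using hz⟩
    have hMS : ∀ t ∈ Set.Ico (0:ℝ) T, Sm t * Mm t = 1 := by
      intro t ht
      simp only [hMmdef]
      exact Ring.mul_inverse_cancel _ (hSU t ht)
    -- derivative of Sm (matrix level)
    have hSent : ∀ t ∈ Set.Ico (0:ℝ) T, HasDerivWithinAt Sm (Sd t) (Set.Ico 0 T) t := by
      intro t ht
      rw [hasDerivWithinAt_matrix]
      intro i k
      have h := HasDerivWithinAt.sum (u := Finset.univ)
        (fun j (_ : j ∈ Finset.univ) => (hGent t ht i j).mul (hGent t ht k j))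
      have hfe : (fun s => Sm s i k) = fun s => ∑ j, Gf s i j * Gf s k j := by
        funext s; simp [hSmdef, Matrix.mul_apply]
      rw [hfe]
      rw [Finset.sum_fn] at h
      refine h.congr_deriv ?_
      simp [hSddef, Matrix.mul_apply, Matrix.add_apply, Matrix.transpose_apply,
        Finset.sum_add_distrib]
    haveI : CompleteSpace (Matrix (Fin m ⊕ Fin n) (Fin m ⊕ Fin n) ℝ) :=
      FiniteDimensional.complete ℝ _
    -- derivative of Mm (matrix level)
    have hMd : ∀ t ∈ Set.Ico (0:ℝ) T, HasDerivWithinAt Mm (Md t) (Set.Ico 0 T) t := by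
      intro t ht
      have hUt := hSU t ht
      have hminv : ((hUt.unit⁻¹ : (Matrix (Fin m ⊕ Fin n) (Fin m ⊕ Fin n) ℝ)ˣ) :
          Matrix (Fin m ⊕ Fin n) (Fin m ⊕ Fin n) ℝ) = Mm t := by
        simp only [hMmdef]
        have h5 := Ring.inverse_unit hUt.unit
        rw [hUt.unit_spec] at h5
        exact h5.symm
      have h0 := hasFDerivAt_ringInverse (𝕜 := ℝ) hUt.unit
      rw [hminv, hUt.unit_spec] at h0
      have h2 := h0.comp_hasDerivWithinAt t (hSent t ht)
      have h4 : HasDerivWithinAt (fun s => Ring.inverse (Sm s)) (Md t) (Set.Ico 0 T) t := by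
        refine h2.congr_deriv ?_
        simp [hMddef, ContinuousLinearMap.mulLeftRight_apply]
      simpa only [hMmdef] using h4
    have hMent : ∀ t ∈ Set.Ico (0:ℝ) T, ∀ i k,
        HasDerivWithinAt (fun s => Mm s i k) (Md t i k) (Set.Ico 0 T) t :=
      fun t ht => hasDerivWithinAt_matrix.mp (hMd t ht)
    have hMc : ∀ i k, ContinuousOn (fun s => Mm s i k) (Set.Ico (0:ℝ) T) :=
      fun i k s hs => (hMent s hs i k).continuousWithinAt
    have hSdc : ∀ i k, ContinuousOn (fun s => Sd s i k) (Set.Ico (0:ℝ) T) := by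
      intro i k
      have h1 : (fun s => Sd s i k) = fun s =>
          (∑ j, Gd s i j * Gf s k j) + ∑ j, Gf s i j * Gd s k j := by
        funext s
        simp [hSddef, Matrix.add_apply, Matrix.mul_apply, Matrix.transpose_apply]
      rw [h1]
      exact (continuousOn_finset_sum _ fun j _ => (hGdc i j).mul (hGfc k j)).add
        (continuousOn_finset_sum _ fun j _ => (hGfc i j).mul (hGdc k j))
    have hMdc : ∀ i k, ContinuousOn (fun s => Md s i k) (Set.Ico (0:ℝ) T) := by
      intro i k
      have h1 : (fun s => Md s i k) = fun s =>
          -∑ j, (∑ l, Mm s i l * Sd s l j) * Mm s j k := by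
        funext s
        simp [hMddef, Matrix.mul_apply, Matrix.neg_apply]
      rw [h1]
      exact (continuousOn_finset_sum _ fun j _ =>
        ((continuousOn_finset_sum _ fun l _ => (hMc i l).mul (hSdc l j)).mul (hMc j k))).neg
    -- entrywise derivatives of Pm
    have hPent : ∀ t ∈ Set.Ico (0:ℝ) T, ∀ j k,
        HasDerivWithinAt (fun s => Pm s j k) (Pd t j k) (Set.Ico 0 T) t := by
      intro t ht j k
      have h := HasDerivWithinAt.sum (u := Finset.univ)
        (fun l (_ : l ∈ Finset.univ) => (hGent t ht l j).mul (hMent t ht l k))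
      have hfe : (fun s => Pm s j k) = fun s => ∑ l, Gf s l j * Mm s l k := by
        funext s; simp [hPmdef, Matrix.mul_apply, Matrix.transpose_apply]
      rw [hfe]
      rw [Finset.sum_fn] at h
      refine h.congr_deriv ?_
      simp [hPddef, Matrix.mul_apply, Matrix.add_apply, Matrix.transpose_apply,
        Finset.sum_add_distrib]
    have hPc : ∀ j k, ContinuousOn (fun s => Pm s j k) (Set.Ico (0:ℝ) T) :=
      fun j k s hs => (hPent s hs j k).continuousWithinAt
    have hPdc : ∀ j k, ContinuousOn (fun s => Pd s j k) (Set.Ico (0:ℝ) T) := by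
      intro j k
      have h1 : (fun s => Pd s j k) = fun s =>
          (∑ l, Gd s l j * Mm s l k) + ∑ l, Gf s l j * Md s l k := by
        funext s
        simp [hPddef, Matrix.add_apply, Matrix.mul_apply, Matrix.transpose_apply]
      rw [h1]
      exact (continuousOn_finset_sum _ fun l _ => (hGdc l j).mul (hMc l k)).add
        (continuousOn_finset_sum _ fun l _ => (hGfc l j).mul (hMdc l k))
    -- derivatives of w
    have hwent : ∀ t ∈ Set.Ico (0:ℝ) T, ∀ r,
        HasDerivWithinAt (fun s => wv s r) (wd t r) (Set.Ico 0 T) t := by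
      intro t ht r
      cases r with
      | inl a =>
        have := hasDerivWithinAt_pi.mp (hubd' t ht) a
        simpa [hwvdef, hwddef] using this
      | inr b =>
        have := hasDerivWithinAt_pi.mp (hxbd t ht) b
        simpa [hwvdef, hwddef] using this
    have hwc : ∀ r, ContinuousOn (fun s => wv s r) (Set.Ico (0:ℝ) T) :=
      fun r s hs => (hwent s hs r).continuousWithinAt
    have hwdc : ∀ r, ContinuousOn (fun s => wd s r) (Set.Ico (0:ℝ) T) := by
      intro r
      cases r with
      | inl a =>
        have := (continuous_apply a).comp_continuousOn hdubc
        simpa [hwddef, Function.comp_def] using this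
      | inr b =>
        have h1 : (fun s => wd s (Sum.inr b)) = fun s =>
            (∑ c, A b c * xb s c) + ∑ c, B b c * ub s c := by
          funext s
          simp [hwddef, Matrix.mulVec, dotProduct]
        rw [h1]
        refine ContinuousOn.add ?_ ?_
        · exact continuousOn_finset_sum _ fun c _ =>
            continuousOn_const.mul ((continuous_apply c).comp_continuousOn hxbc)
        · exact continuousOn_finset_sum _ fun c _ =>
            continuousOn_const.mul ((continuous_apply c).comp_continuousOn hubc)
    -- entrywise derivatives of αf
    have hαent : ∀ t ∈ Set.Ico (0:ℝ) T, ∀ j,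
        HasDerivWithinAt (fun s => αf s j) (αdf t j) (Set.Ico 0 T) t := by
      intro t ht j
      have h := HasDerivWithinAt.sum (u := Finset.univ)
        (fun k (_ : k ∈ Finset.univ) => (hPent t ht j k).mul (hwent t ht k))
      have hfe : (fun s => αf s j) = fun s => ∑ k, Pm s j k * wv s k := by
        funext s; simp [hαfdef, Matrix.mulVec, dotProduct]
      rw [hfe]
      rw [Finset.sum_fn] at h
      refine h.congr_deriv ?_
      simp [hαdfdef, Matrix.mulVec, dotProduct, Pi.add_apply, Finset.sum_add_distrib]
    have hα : ∀ t ∈ Set.Ico (0:ℝ) T, HasDerivWithinAt αf (αdf t) (Set.Ico 0 T) t :=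
      fun t ht => hasDerivWithinAt_pi.mpr (fun j => hαent t ht j)
    have hαdc : ContinuousOn αdf (Set.Ico (0:ℝ) T) := by
      rw [continuousOn_pi]
      intro j
      have h1 : (fun s => αdf s j) = fun s =>
          (∑ k, Pd s j k * wv s k) + ∑ k, Pm s j k * wd s k := by
        funext s
        simp [hαdfdef, Matrix.mulVec, dotProduct, Pi.add_apply]
      rw [h1]
      exact (continuousOn_finset_sum _ fun k _ => (hPdc j k).mul (hwc k)).add
        (continuousOn_finset_sum _ fun k _ => (hPc j k).mul (hwdc k))
    -- the key pointwise identity G α = w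
    have hGα : ∀ s ∈ Set.Ico (0:ℝ) T, (Gf s).mulVec (αf s) = wv s := by
      intro s hs
      simp only [hαfdef, hPmdef]
      rw [Matrix.mulVec_mulVec, ← Matrix.mul_assoc]
      rw [show Gf s * (Gf s)ᵀ = Sm s from by simp [hSmdef]]
      rw [hMS s hs, Matrix.one_mulVec]
    have hups : ∀ s ∈ Set.Ico (0:ℝ) T, (H1 N T u s).mulVec (αf s) = ub s := by
      intro s hs
      funext a
      have := congrFun (hGα s hs) (Sum.inl a)
      simpa [hGfdef, Matrix.fromRows_mulVec, hwvdef] using this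
    have hxps : ∀ s ∈ Set.Ico (0:ℝ) T, (H1 N T x s).mulVec (αf s) = xb s := by
      intro s hs
      funext b
      have := congrFun (hGα s hs) (Sum.inr b)
      simpa [hGfdef, Matrix.fromRows_mulVec, hwvdef] using this
    -- differentiating G α = w
    have hkey : ∀ t ∈ Set.Ico (0:ℝ) T, ∀ r,
        ((Gd t).mulVec (αf t)) r + ((Gf t).mulVec (αdf t)) r = wd t r := by
      intro t ht r
      have hU := uniqueDiffOn_Ico (0:ℝ) T t ht
      have h1 : HasDerivWithinAt (fun s => ((Gf s).mulVec (αf s)) r)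
          (((Gd t).mulVec (αf t)) r + ((Gf t).mulVec (αdf t)) r) (Set.Ico 0 T) t := by
        have h := HasDerivWithinAt.sum (u := Finset.univ)
          (fun j (_ : j ∈ Finset.univ) => (hGent t ht r j).mul (hαent t ht j))
        have hfe : (fun s => ((Gf s).mulVec (αf s)) r) = fun s => ∑ j, Gf s r j * αf s j := by
          funext s; simp [Matrix.mulVec, dotProduct]
        rw [hfe]
        rw [Finset.sum_fn] at h
        refine h.congr_deriv ?_
        simp [Matrix.mulVec, dotProduct, Finset.sum_add_distrib]
      have h2 : HasDerivWithinAt (fun s => ((Gf s).mulVec (αf s)) r) (wd t r)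
          (Set.Ico 0 T) t := by
        have hw := hwent t ht r
        exact hw.congr (fun s hs => congrFun (hGα s hs) r) (congrFun (hGα t ht) r)
      exact (h1.derivWithin hU).symm.trans (h2.derivWithin hU)
    refine ⟨αf, αdf, hα, hαdc, ?_, hups 0 h0mem, by rw [hxps 0 h0mem, hxb0], ?_⟩
    · -- equation (6)
      intro t ht
      constructor
      · funext a
        have hk := hkey t ht (Sum.inl a)
        simp only [hGfdef, hGddef, Matrix.fromRows_mulVec, Sum.elim_inl, hwddef] at hk
        simp only [Pi.add_apply, Pi.neg_apply]
        linarith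
      · funext b
        have hk := hkey t ht (Sum.inr b)
        simp only [hGfdef, hGddef, Matrix.fromRows_mulVec, Sum.elim_inr, hwddef] at hk
        have hdx : (H1 N T (fun s => A.mulVec (x s) + B.mulVec (u s)) t).mulVec (αf t)
            = A.mulVec (xb t) + B.mulVec (ub t) := by
          rw [hH1dx t, Matrix.add_mulVec, ← Matrix.mulVec_mulVec, ← Matrix.mulVec_mulVec,
            hups t ht, hxps t ht]
        rw [hdx] at hk
        simp only [Pi.zero_apply]
        linarith
    · -- equation (8)
      intro t ht
      refine ⟨hups t ht, ?_⟩
      rw [hH1y t ht, Matrix.add_mulVec, ← Matrix.mulVec_mulVec, ← Matrix.mulVec_mulVec,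
        hups t ht, hxps t ht, hybe t ht]
  · -- backward direction
    rintro ⟨α, αd, hα, hαdc, h6, h7u, h7x, h8⟩
    refine ⟨fun t => (H1 N T x t).mulVec (α t), h7x, ?_, ?_⟩
    · intro t ht
      rw [hasDerivWithinAt_pi]
      intro b
      have h := HasDerivWithinAt.sum (u := Finset.univ)
        (fun (j : Fin N) (_ : j ∈ Finset.univ) =>
          (hasDerivWithinAt_pi.mp (hx' j t ht) b).mul (hasDerivWithinAt_pi.mp (hα t ht) j))
      have hfe : (fun s => ((H1 N T x s).mulVec (α s)) b)
          = fun s => ∑ j : Fin N, x (s + ((j:ℕ):ℝ) * T) b * α s j := by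
        funext s; simp [H1, Matrix.mulVec, dotProduct]
      have e1 : ∑ j : Fin N, x (t + ((j:ℕ):ℝ) * T) b * αd t j = 0 := by
        have := congrFun (h6 t ht).2 b
        simpa [Matrix.mulVec, dotProduct, H1] using this
      have e2 : ∑ j : Fin N, (A.mulVec (x (t + ((j:ℕ):ℝ) * T))
            + B.mulVec (u (t + ((j:ℕ):ℝ) * T))) b * α t j
          = (A.mulVec ((H1 N T x t).mulVec (α t)) + B.mulVec (ub t)) b := by
        have h3 : ∑ j : Fin N, (A.mulVec (x (t + ((j:ℕ):ℝ) * T))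
              + B.mulVec (u (t + ((j:ℕ):ℝ) * T))) b * α t j
            = ((H1 N T (fun s => A.mulVec (x s) + B.mulVec (u s)) t).mulVec (α t)) b := by
          simp [H1, Matrix.mulVec, dotProduct]
        rw [h3, hH1dx t, Matrix.add_mulVec, ← Matrix.mulVec_mulVec, ← Matrix.mulVec_mulVec,
          (h8 t ht).1]
      show HasDerivWithinAt (fun s => ((H1 N T x s).mulVec (α s)) b)
        ((A.mulVec ((H1 N T x t).mulVec (α t)) + B.mulVec (ub t)) b) (Set.Ico 0 T) t
      rw [hfe]
      rw [Finset.sum_fn] at h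
      refine h.congr_deriv ?_
      simp only [Finset.sum_add_distrib, e1, e2, add_zero]
    · intro t ht
      rw [← (h8 t ht).2, hH1y t ht, Matrix.add_mulVec, ← Matrix.mulVec_mulVec,
        ← Matrix.mulVec_mulVec, (h8 t ht).1]
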